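/- There exist a finite vertex set V, an independence model I over V, and a maximal ancestral graph (MAG) G over V such that G satisfies the Markov and Adjacency-faithfulness assumptions with I but does not satisfy the Faithfulness assumption with I. Concretely, take V = {V1, V2, V3}, let I consist exactly of the triples ({V1},{V3},∅), ({V3},{V1},∅), ({V1},{V3},{V2}), ({V3},{V1},{V2}), and let G be the MAG with edges V1→V2 and V2↔V3; then G satisfies Markov and Adjacency-faithfulness with I but not Faithfulness with I. -/

import Mathlib

/-- The kind of an edge as traversed from left to right along a path:
forward directed (`a → b`), backward directed (`a ← b`), or bidirected (`a ↔ b`). -/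
inductive EKind : Type
  | fwd | bwd | bi
deriving DecidableEq, Inhabited

/-- The edge kind has an arrowhead at its left endpoint. -/
def EKind.arrowLeft : EKind → Prop
  | .fwd => False
  | .bwd => True
  | .bi  => True

/-- The edge kind has an arrowhead at its right endpoint. -/
def EKind.arrowRight : EKind → Prop
  | .fwd => True
  | .bwd => False
  | .bi  => True

/-- A mixed graph over a vertex type `V`: a set of directed edges and a set of
bidirected edges between distinct vertices. -/
structure MGraph (V : Type) where
  dir : V → V → Prop
  bidir : V → V → Prop
  dir_irrefl : ∀ x, ¬ dir x x
  bidir_irrefl : ∀ x, ¬ bidir x x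
  bidir_symm : ∀ x y, bidir x y → bidir y x

namespace MGraph

variable {V : Type}

/-- There is an edge of the given kind (read left-to-right) between `a` and `b`. -/
def edgeKind (G : MGraph V) : EKind → V → V → Prop
  | .fwd, a, b => G.dir a b
  | .bwd, a, b => G.dir b a
  | .bi,  a, b => G.bidir a b

/-- `x` is an ancestor of `y`: `x = y` or there is a directed path from `x` to `y`. -/
def Ancestor (G : MGraph V) : V → V → Prop := Relation.ReflTransGen G.dir

/-- The graph has no directed cycle. -/
def Acyclic (G : MGraph V) : Prop := ∀ x y, G.Ancestor x y → G.Ancestor y x → x = y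

/-- `x` and `y` are adjacent: some edge joins them. -/
def Adj (G : MGraph V) (x y : V) : Prop := G.dir x y ∨ G.dir y x ∨ G.bidir x y

/-- A path between `x` and `y`: a sequence of distinct vertices starting at `x` and
ending at `y`, together with, for each consecutive pair, an edge of the graph between
them (recorded by its kind). -/
structure Path (G : MGraph V) (x y : V) : Type where
  verts : List V
  kinds : List EKind
  len_eq : verts.length = kinds.length + 1
  nodup : verts.Nodup
  head_eq : verts.head? = some x
  last_eq : verts.getLast? = some y
  valid : ∀ i, i < kinds.length →
    G.edgeKind (kinds.getD i .fwd) (verts.getD i x) (verts.getD (i + 1) x)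

namespace Path

variable {G : MGraph V} {x y : V}

/-- The `i`-th vertex on the path. -/
def vert (p : G.Path x y) (i : ℕ) : V := p.verts.getD i x

/-- The kind of the `i`-th edge on the path. -/
def kind (p : G.Path x y) (i : ℕ) : EKind := p.kinds.getD i .fwd

/-- The (non-endpoint) vertex at position `i` is a collider on the path: both incident
edges have an arrowhead at it. -/
def ColliderAt (p : G.Path x y) (i : ℕ) : Prop :=
  1 ≤ i ∧ i + 1 < p.verts.length ∧
    (p.kind (i - 1)).arrowRight ∧ (p.kind i).arrowLeft

/-- The path is m-connecting given `Z`: every non-collider on it is not in `Z` and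
every collider on it has a descendant in `Z`. -/
def MConn (p : G.Path x y) (Z : Set V) : Prop :=
  ∀ i, 1 ≤ i → i + 1 < p.verts.length →
    (p.ColliderAt i → ∃ d ∈ Z, G.Ancestor (p.vert i) d) ∧
    (¬ p.ColliderAt i → p.vert i ∉ Z)

/-- The path is an inducing path: every non-endpoint vertex is a collider on the path
and an ancestor of one of the endpoints. -/
def Inducing (p : G.Path x y) : Prop :=
  ∀ i, 1 ≤ i → i + 1 < p.verts.length →
    p.ColliderAt i ∧ (G.Ancestor (p.vert i) x ∨ G.Ancestor (p.vert i) y)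

end Path

/-- Distinct vertices `x, y ∉ Z` are m-separated by `Z`: no path between them is
m-connecting given `Z`. -/
def MSep (G : MGraph V) (x y : V) (Z : Set V) : Prop :=
  x ≠ y ∧ x ∉ Z ∧ y ∉ Z ∧
    (∀ p : G.Path x y, ¬ p.MConn Z) ∧ (∀ p : G.Path y x, ¬ p.MConn Z)

/-- Sets `A` and `B` are m-separated by `C`: every `a ∈ A` and `b ∈ B` are. -/
def MSepSets (G : MGraph V) (A B C : Set V) : Prop :=
  ∀ a ∈ A, ∀ b ∈ B, G.MSep a b C

/-- `x` and `y` are virtually adjacent: there is an inducing path between them. -/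
def VAdj (G : MGraph V) (x y : V) : Prop :=
  x ≠ y ∧ ((∃ p : G.Path x y, p.Inducing) ∨ (∃ p : G.Path y x, p.Inducing))

/-- The graph `M` corresponding to an SMCM `S`: distinct `x, y` are adjacent in `M`
iff there is an inducing path between them in `S`, with the edge oriented `x → y` if
`x` is an ancestor of `y` in `S`, `y → x` if `y` is an ancestor of `x` in `S`, and
`x ↔ y` otherwise. -/
def mag (S : MGraph V) : MGraph V where
  dir x y := S.VAdj x y ∧ S.Ancestor x y
  bidir x y := S.VAdj x y ∧ ¬ S.Ancestor x y ∧ ¬ S.Ancestor y x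
  dir_irrefl := fun x h => h.1.1 rfl
  bidir_irrefl := fun x h => h.1.1 rfl
  bidir_symm := fun _ _ h => ⟨⟨h.1.1.symm, h.1.2.symm⟩, h.2.2, h.2.1⟩

/-- An ancestral graph: at most one edge between any two vertices, and whenever `x`
is an ancestor of `y`, no edge between `x` and `y` has an arrowhead at `x`. -/
def Ancestral (G : MGraph V) : Prop :=
  (∀ x y, G.Ancestor x y → x ≠ y → ¬ G.dir y x ∧ ¬ G.bidir x y) ∧
  (∀ x y, ¬ (G.dir x y ∧ G.bidir x y))

/-- A maximal ancestral graph: an ancestral graph in which every pair of non-adjacent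
vertices is m-separated by some subset of the remaining vertices. -/
def IsMAG (G : MGraph V) : Prop :=
  G.Ancestral ∧ ∀ x y : V, x ≠ y → ¬ G.Adj x y →
    ∃ Z : Set V, x ∉ Z ∧ y ∉ Z ∧ G.MSep x y Z

/-- The number of edges of a mixed graph (directed edges plus bidirected edges, the
latter counted as unordered pairs). -/
noncomputable def numEdges (G : MGraph V) : ℕ :=
  {p : V × V | G.dir p.1 p.2}.ncard +
    {e : Sym2 V | ∃ a b, e = s(a, b) ∧ G.bidir a b}.ncard

/-- The number of virtual adjacencies (unordered pairs of virtually adjacent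
vertices). -/
noncomputable def numVAdj (G : MGraph V) : ℕ :=
  {e : Sym2 V | ∃ a b, e = s(a, b) ∧ G.VAdj a b}.ncard

/-- The number of m-separation statements entailed by the graph: triples `(X, Y, Z)`
of pairwise disjoint subsets with `X, Y` nonempty such that `X` and `Y` are
m-separated by `Z`. -/
noncomputable def numSep (G : MGraph V) : ℕ :=
  {t : Set V × Set V × Set V | t.1.Nonempty ∧ t.2.1.Nonempty ∧
    Disjoint t.1 t.2.1 ∧ Disjoint t.1 t.2.2 ∧ Disjoint t.2.1 t.2.2 ∧
    G.MSepSets t.1 t.2.1 t.2.2}.ncard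

/-- An unshielded triple `⟨a, z, b⟩`: `a, z` adjacent, `z, b` adjacent, `a, b` not
adjacent. -/
def UnshieldedTriple (G : MGraph V) (a z b : V) : Prop :=
  a ≠ z ∧ z ≠ b ∧ a ≠ b ∧ G.Adj a z ∧ G.Adj z b ∧ ¬ G.Adj a b

/-- Some edge between `a` and `z` has an arrowhead at `z`. -/
def ArrowAt (G : MGraph V) (a z : V) : Prop := G.dir a z ∨ G.bidir a z

/-- An unshielded collider: an unshielded triple whose two edges both have arrowheads
at the middle vertex. -/
def UnshieldedCollider (G : MGraph V) (a z b : V) : Prop :=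
  G.UnshieldedTriple a z b ∧ G.ArrowAt a z ∧ G.ArrowAt b z

/-- A discriminating path for `⟨X, Z, Y⟩`: a path `(V₀, V₁, ..., Vₘ = X, Z, Y)` with
`m ≥ 1` such that `V₀` and `Y` are not adjacent and every `Vᵢ` with `1 ≤ i ≤ m` is a
collider on the path and a parent of `Y`. -/
def IsDiscriminating (G : MGraph V) {v₀ w : V} (p : G.Path v₀ w) (X Z Y : V) : Prop :=
  4 ≤ p.verts.length ∧ w = Y ∧
  p.vert (p.verts.length - 3) = X ∧
  p.vert (p.verts.length - 2) = Z ∧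
  v₀ ≠ Y ∧ ¬ G.Adj v₀ Y ∧
  ∀ i, 1 ≤ i → i ≤ p.verts.length - 3 → p.ColliderAt i ∧ G.dir (p.vert i) Y

end MGraph

/-- An independence model over `V`: a set of triples `(X, Y, Z)` of pairwise disjoint
subsets of `V` with `X, Y` nonempty. -/
def IsIndepModel {V : Type} (I : Set (Set V × Set V × Set V)) : Prop :=
  ∀ t ∈ I, t.1.Nonempty ∧ t.2.1.Nonempty ∧
    Disjoint t.1 t.2.1 ∧ Disjoint t.1 t.2.2 ∧ Disjoint t.2.1 t.2.2

/-- `G` satisfies the Markov assumption with `I`: every triple `(X, Y, Z)` such that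
`X` and `Y` are m-separated by `Z` in `G` belongs to `I`. -/
def Markov {V : Type} (G : MGraph V) (I : Set (Set V × Set V × Set V)) : Prop :=
  ∀ X Y Z : Set V, X.Nonempty → Y.Nonempty →
    Disjoint X Y → Disjoint X Z → Disjoint Y Z →
    G.MSepSets X Y Z → (X, Y, Z) ∈ I

/-- `G` satisfies the Faithfulness assumption with `I`: every triple in `I` is
m-separated in `G`. -/
def Faithful {V : Type} (G : MGraph V) (I : Set (Set V × Set V × Set V)) : Prop :=
  ∀ X Y Z : Set V, (X, Y, Z) ∈ I → G.MSepSets X Y Z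

/-- `G` satisfies the Adjacency-faithfulness assumption with `I`: for adjacent
distinct `x, y` and any `Z ⊆ V ∖ {x, y}`, the triple `({x}, {y}, Z)` is not in `I`. -/
def AdjFaithful {V : Type} (G : MGraph V) (I : Set (Set V × Set V × Set V)) : Prop :=
  ∀ x y : V, x ≠ y → G.Adj x y →
    ∀ Z : Set V, x ∉ Z → y ∉ Z → ({x}, {y}, Z) ∉ I

/-- `G` satisfies the V-adjacency-faithfulness assumption with `I`: for virtually
adjacent `x, y` and any `Z ⊆ V ∖ {x, y}`, the triple `({x}, {y}, Z)` is not in `I`. -/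
def VAdjFaithful {V : Type} (G : MGraph V) (I : Set (Set V × Set V × Set V)) : Prop :=
  ∀ x y : V, G.VAdj x y →
    ∀ Z : Set V, x ∉ Z → y ∉ Z → ({x}, {y}, Z) ∉ I

/-- A MAG `G` is NoE-minimal with `I`: no MAG over `V` with strictly fewer edges
satisfies the Markov assumption with `I`. -/
def NoEMinimalMAG {V : Type} (G : MGraph V) (I : Set (Set V × Set V × Set V)) : Prop :=
  ¬ ∃ G' : MGraph V, G'.IsMAG ∧ G'.numEdges < G.numEdges ∧ Markov G' I

/-- An SMCM `G` is NoE-minimal with `I`: no SMCM over `V` with strictly fewer edges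
satisfies the Markov assumption with `I`. -/
def NoEMinimalSMCM {V : Type} (G : MGraph V) (I : Set (Set V × Set V × Set V)) : Prop :=
  ¬ ∃ G' : MGraph V, G'.Acyclic ∧ G'.numEdges < G.numEdges ∧ Markov G' I

/-- An SMCM `G` is V-adjacency-minimal with `I`: no SMCM over `V` with strictly fewer
virtual adjacencies satisfies the Markov assumption with `I`. -/
def VAdjMinimal {V : Type} (G : MGraph V) (I : Set (Set V × Set V × Set V)) : Prop :=
  ¬ ∃ G' : MGraph V, G'.Acyclic ∧ G'.numVAdj < G.numVAdj ∧ Markov G' I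

/-- A MAG `G` is NoI-minimal with `I`: no MAG over `V` entailing strictly more
m-separation statements satisfies the Markov assumption with `I`. -/
def NoIMinimalMAG {V : Type} (G : MGraph V) (I : Set (Set V × Set V × Set V)) : Prop :=
  ¬ ∃ G' : MGraph V, G'.IsMAG ∧ G.numSep < G'.numSep ∧ Markov G' I

/-- An SMCM `G` is NoI-minimal with `I`: no SMCM over `V` entailing strictly more
m-separation statements satisfies the Markov assumption with `I`. -/
def NoIMinimalSMCM {V : Type} (G : MGraph V) (I : Set (Set V × Set V × Set V)) : Prop :=
  ¬ ∃ G' : MGraph V, G'.Acyclic ∧ G.numSep < G'.numSep ∧ Markov G' I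


/-- The concrete MAG/SMCM over `V = {V1, V2, V3}` (as `Fin 3`, with `V1 = 0`,
`V2 = 1`, `V3 = 2`) with edges `V1 → V2` and `V2 ↔ V3`. -/
def exGraph3 : MGraph (Fin 3) where
  dir a b := a = 0 ∧ b = 1
  bidir a b := (a = 1 ∧ b = 2) ∨ (a = 2 ∧ b = 1)
  dir_irrefl := by decide
  bidir_irrefl := by decide
  bidir_symm := by decide

/-- The concrete independence model consisting exactly of the triples
`({V1},{V3},∅)`, `({V3},{V1},∅)`, `({V1},{V3},{V2})`, `({V3},{V1},{V2})`. -/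
def exI3 : Set (Set (Fin 3) × Set (Fin 3) × Set (Fin 3)) :=
  {({0}, {2}, ∅), ({2}, {0}, ∅), ({0}, {2}, {1}), ({2}, {0}, {1})}


section Helpers

open MGraph

lemma anc_iff (x y : Fin 3) : exGraph3.Ancestor x y ↔ x = y ∨ (x = 0 ∧ y = 1) := by
  constructor
  · intro h
    induction h with
    | refl => exact Or.inl rfl
    | tail _ hd ih =>
      obtain ⟨rfl, rfl⟩ := hd
      rcases ih with rfl | ⟨rfl, h⟩
      · exact Or.inr ⟨rfl, rfl⟩
      · exact absurd h (by decide)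
  · rintro (rfl | ⟨rfl, rfl⟩)
    · exact Relation.ReflTransGen.refl
    · exact Relation.ReflTransGen.single ⟨rfl, rfl⟩

/-- Build a length-2 path along a single edge; it is m-connecting given any Z. -/
lemma path2 {a b : Fin 3} (k : EKind) (hab : a ≠ b) (he : exGraph3.edgeKind k a b) :
    ∃ p : exGraph3.Path a b, ∀ Z : Set (Fin 3), p.MConn Z := by
  refine ⟨⟨[a, b], [k], rfl, by simp [hab], rfl, rfl, ?_⟩, ?_⟩
  · intro i hi
    have hi0 : i = 0 := by simpa using hi
    subst hi0
    simpa using he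
  · intro Z i hi hlt
    simp at hlt
    omega

lemma path02 : ∃ p : exGraph3.Path 0 2,
    ∀ Z : Set (Fin 3), (1 : Fin 3) ∈ Z → p.MConn Z := by
  refine ⟨⟨[0, 1, 2], [.fwd, .bi], rfl, by decide, rfl, rfl, ?_⟩, ?_⟩
  · intro i hi
    simp only [List.length_cons, List.length_nil] at hi
    interval_cases i <;> simp [MGraph.edgeKind, exGraph3]
  · intro Z h1 i hi hlt
    simp at hlt
    have : i = 1 := by omega
    subst this
    constructor
    · intro _
      exact ⟨1, h1, Relation.ReflTransGen.refl⟩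
    · intro hnc
      exact absurd ⟨le_refl 1, by simp, trivial, trivial⟩ hnc

/-- Enumeration of paths in `exGraph3`. -/
lemma path_cases {x y : Fin 3} (p : exGraph3.Path x y) :
    (x = y) ∨
    (∃ k, p.verts = [x, y] ∧ p.kinds = [k] ∧ x ≠ y ∧ exGraph3.edgeKind k x y) ∨
    (∃ b k0 k1, p.verts = [x, b, y] ∧ p.kinds = [k0, k1] ∧
      b ≠ x ∧ b ≠ y ∧ x ≠ y ∧
      exGraph3.edgeKind k0 x b ∧ exGraph3.edgeKind k1 b y) := by
  have hlen := p.len_eq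
  have hnd := p.nodup
  have hh := p.head_eq
  have hl := p.last_eq
  have hcard : p.verts.length ≤ 3 := by
    simpa using List.Nodup.length_le_card hnd
  rcases hv : p.verts with _ | ⟨a, _ | ⟨b, _ | ⟨c, _ | ⟨d, t⟩⟩⟩⟩
  · rw [hv] at hh; simp at hh
  · rw [hv] at hh hl
    simp at hh hl
    exact Or.inl (hh.symm.trans hl)
  · -- two vertices
    rw [hv] at hh hl hlen hnd
    simp at hh hl hnd
    obtain ⟨k, hk⟩ : ∃ k, p.kinds = [k] := by
      rcases hk : p.kinds with _ | ⟨k0, _ | ⟨k1, t⟩⟩ <;> rw [hk] at hlen <;>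
        simp_all
    have hv0 := p.valid 0 (by rw [hk]; simp)
    rw [hk, hv] at hv0
    subst hh hl
    refine Or.inr (Or.inl ⟨k, rfl, hk, hnd, ?_⟩)
    simpa using hv0
  · -- three vertices
    rw [hv] at hh hl hlen hnd
    simp at hh hl hnd
    obtain ⟨k0, k1, hk⟩ : ∃ k0 k1, p.kinds = [k0, k1] := by
      rcases hk : p.kinds with _ | ⟨k0, _ | ⟨k1, _ | ⟨k2, t⟩⟩⟩ <;> rw [hk] at hlen <;>
        simp_all
    have hv0 := p.valid 0 (by rw [hk]; simp)
    have hv1 := p.valid 1 (by rw [hk]; simp)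
    rw [hk, hv] at hv0 hv1
    subst hh hl
    refine Or.inr (Or.inr ⟨b, k0, k1, rfl, hk, ?_, ?_, ?_, by simpa using hv0,
      by simpa using hv1⟩)
    · exact fun h => hnd.1.1 h.symm
    · exact hnd.2
    · exact hnd.1.2
  · rw [hv] at hcard
    simp at hcard
    omega

lemma no_mconn_empty_02 (p : exGraph3.Path 0 2) : ¬ p.MConn ∅ := by
  rcases path_cases p with h | ⟨k, hv, hk, hne, he⟩ | ⟨b, k0, k1, hv, hk, hb0, hb2, hne, he0, he1⟩
  · simp at h
  · intro _
    rcases k <;> simp [MGraph.edgeKind, exGraph3] at he <;> omega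
  · have hb : b = 1 := by fin_cases b <;> simp_all
    subst hb
    have hk0 : k0 = .fwd := by
      rcases k0 <;> simp [MGraph.edgeKind, exGraph3] at he0 ⊢ <;> omega
    have hk1 : k1 = .bi := by
      rcases k1 <;> simp [MGraph.edgeKind, exGraph3] at he1 ⊢ <;> omega
    subst hk0; subst hk1
    intro hc
    have h1 := (hc 1 (le_refl 1) (by rw [hv]; simp)).1
      ⟨le_refl 1, by rw [hv]; simp, by simp [MGraph.Path.kind, hk]; trivial, by simp [MGraph.Path.kind, hk]; trivial⟩
    obtain ⟨d, hd, _⟩ := h1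
    exact hd

lemma no_mconn_empty_20 (p : exGraph3.Path 2 0) : ¬ p.MConn ∅ := by
  rcases path_cases p with h | ⟨k, hv, hk, hne, he⟩ | ⟨b, k0, k1, hv, hk, hb0, hb2, hne, he0, he1⟩
  · simp at h
  · intro _
    rcases k <;> simp [MGraph.edgeKind, exGraph3] at he <;> omega
  · have hb : b = 1 := by fin_cases b <;> simp_all
    subst hb
    have hk0 : k0 = .bi := by
      rcases k0 <;> simp [MGraph.edgeKind, exGraph3] at he0 ⊢ <;> omega
    have hk1 : k1 = .bwd := by
      rcases k1 <;> simp [MGraph.edgeKind, exGraph3] at he1 ⊢ <;> omega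
    subst hk0; subst hk1
    intro hc
    have h1 := (hc 1 (le_refl 1) (by rw [hv]; simp)).1
      ⟨le_refl 1, by rw [hv]; simp, by simp [MGraph.Path.kind, hk]; trivial, by simp [MGraph.Path.kind, hk]; trivial⟩
    obtain ⟨d, hd, _⟩ := h1
    exact hd

lemma msep02 : exGraph3.MSep 0 2 ∅ := by
  exact ⟨by decide, by simp, by simp, fun p => no_mconn_empty_02 p, fun p => no_mconn_empty_20 p⟩

lemma msep20 : exGraph3.MSep 2 0 ∅ := by
  exact ⟨by decide, by simp, by simp, fun p => no_mconn_empty_20 p, fun p => no_mconn_empty_02 p⟩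

/-- Adjacent pairs are never m-separated. -/
lemma not_msep_of_adj {a b : Fin 3} {Z : Set (Fin 3)} (k : EKind) (hab : a ≠ b)
    (he : exGraph3.edgeKind k a b) : ¬ exGraph3.MSep a b Z := by
  intro h
  obtain ⟨p, hp⟩ := path2 k hab he
  exact h.2.2.2.1 p (hp Z)

lemma msep_pair {a b : Fin 3} {Z : Set (Fin 3)} (h : exGraph3.MSep a b Z) :
    (a = 0 ∧ b = 2) ∨ (a = 2 ∧ b = 0) := by
  have hne := h.1
  fin_cases a <;> fin_cases b
  · exact absurd rfl hne
  · exact absurd h (not_msep_of_adj .fwd (by decide) (by simp [MGraph.edgeKind, exGraph3]))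
  · exact Or.inl ⟨rfl, rfl⟩
  · exact absurd h (not_msep_of_adj .bwd (by decide) (by simp [MGraph.edgeKind, exGraph3]))
  · exact absurd rfl hne
  · exact absurd h (not_msep_of_adj .bi (by decide) (by simp [MGraph.edgeKind, exGraph3]))
  · exact Or.inr ⟨rfl, rfl⟩
  · exact absurd h (not_msep_of_adj .bi (by decide) (by simp [MGraph.edgeKind, exGraph3]))
  · exact absurd rfl hne

lemma not_msep_1 {a b : Fin 3} {Z : Set (Fin 3)} (h1 : (1 : Fin 3) ∈ Z)
    (hab : (a = 0 ∧ b = 2) ∨ (a = 2 ∧ b = 0)) : ¬ exGraph3.MSep a b Z := by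
  obtain ⟨p, hp⟩ := path02
  rcases hab with ⟨rfl, rfl⟩ | ⟨rfl, rfl⟩
  · exact fun h => h.2.2.2.1 p (hp Z h1)
  · exact fun h => h.2.2.2.2 p (hp Z h1)

end Helpers

/-- There exist a finite vertex set, an independence model `I`, and a
MAG `G` such that `G` satisfies Markov and Adjacency-faithfulness with `I` but not
Faithfulness with `I`; concretely, the above `exGraph3` and `exI3`. -/

theorem statement_3 :
    IsIndepModel exI3 ∧ exGraph3.IsMAG ∧
    Markov exGraph3 exI3 ∧ AdjFaithful exGraph3 exI3 ∧ ¬ Faithful exGraph3 exI3 := by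
  refine ⟨?_, ⟨⟨?_, ?_⟩, ?_⟩, ?_, ?_, ?_⟩
  · -- IsIndepModel
    rintro t (rfl | rfl | rfl | rfl) <;>
      refine ⟨⟨_, rfl⟩, ⟨_, rfl⟩, ?_, ?_, ?_⟩ <;> simp [Set.disjoint_left]
  · -- ancestral 1
    intro x y hxy hne
    rcases (anc_iff x y).1 hxy with rfl | ⟨rfl, rfl⟩
    · exact absurd rfl hne
    · constructor
      · rintro ⟨h, _⟩; exact absurd h (by decide)
      · rintro (⟨h, _⟩ | ⟨h, _⟩) <;> exact absurd h (by decide)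
  · -- ancestral 2
    rintro x y ⟨⟨rfl, rfl⟩, (⟨h, _⟩ | ⟨h, _⟩)⟩ <;> exact absurd h (by decide)
  · -- maximality
    intro x y hne hnadj
    have : (x = 0 ∧ y = 2) ∨ (x = 2 ∧ y = 0) := by
      fin_cases x <;> fin_cases y <;>
        first
        | exact absurd rfl hne
        | exact Or.inl ⟨rfl, rfl⟩
        | exact Or.inr ⟨rfl, rfl⟩
        | exact absurd (by simp [MGraph.Adj, exGraph3]) hnadj
    rcases this with ⟨rfl, rfl⟩ | ⟨rfl, rfl⟩
    · exact ⟨∅, by simp, by simp, msep02⟩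
    · exact ⟨∅, by simp, by simp, msep20⟩
  · -- Markov
    intro X Y Z hX hY hXY hXZ hYZ hsep
    obtain ⟨a, ha⟩ := hX
    obtain ⟨b, hb⟩ := hY
    have hab := msep_pair (hsep a ha b hb)
    have h1Z : (1 : Fin 3) ∉ Z := fun h1 => not_msep_1 h1 hab (hsep a ha b hb)
    rcases hab with ⟨rfl, rfl⟩ | ⟨rfl, rfl⟩
    · have hXe : X = {0} := by
        ext x
        simp only [Set.mem_singleton_iff]
        refine ⟨fun hx => ?_, fun hx => hx ▸ ha⟩
        rcases msep_pair (hsep x hx _ hb) with ⟨h, _⟩ | ⟨_, h⟩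
        · exact h
        · exact absurd h (by decide)
      have hYe : Y = {2} := by
        ext y
        simp only [Set.mem_singleton_iff]
        refine ⟨fun hy => ?_, fun hy => hy ▸ hb⟩
        rcases msep_pair (hsep _ ha y hy) with ⟨_, h⟩ | ⟨h, _⟩
        · exact h
        · exact absurd h (by decide)
      have hZe : Z = ∅ := by
        ext z
        simp only [Set.mem_empty_iff_false, iff_false]
        intro hz
        have hz0 : z ≠ 0 := fun h => hXZ.ne_of_mem (hXe ▸ rfl) hz h.symm
        have hz2 : z ≠ 2 := fun h => hYZ.ne_of_mem (hYe ▸ rfl) hz h.symm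
        have : z = 1 := by fin_cases z <;> simp_all
        exact h1Z (this ▸ hz)
      rw [hXe, hYe, hZe]
      exact Or.inl rfl
    · have hXe : X = {2} := by
        ext x
        simp only [Set.mem_singleton_iff]
        refine ⟨fun hx => ?_, fun hx => hx ▸ ha⟩
        rcases msep_pair (hsep x hx _ hb) with ⟨_, h⟩ | ⟨h, _⟩
        · exact absurd h (by decide)
        · exact h
      have hYe : Y = {0} := by
        ext y
        simp only [Set.mem_singleton_iff]
        refine ⟨fun hy => ?_, fun hy => hy ▸ hb⟩
        rcases msep_pair (hsep _ ha y hy) with ⟨h, _⟩ | ⟨_, h⟩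
        · exact absurd h (by decide)
        · exact h
      have hZe : Z = ∅ := by
        ext z
        simp only [Set.mem_empty_iff_false, iff_false]
        intro hz
        have hz2 : z ≠ 2 := fun h => hXZ.ne_of_mem (hXe ▸ rfl) hz h.symm
        have hz0 : z ≠ 0 := fun h => hYZ.ne_of_mem (hYe ▸ rfl) hz h.symm
        have : z = 1 := by fin_cases z <;> simp_all
        exact h1Z (this ▸ hz)
      rw [hXe, hYe, hZe]
      exact Or.inr (Or.inl rfl)
  · -- AdjFaithful
    intro x y hne hadj Z hx hy hmem
    have hxy : (x = 0 ∧ y = 1) ∨ (x = 1 ∧ y = 0) ∨ (x = 1 ∧ y = 2) ∨ (x = 2 ∧ y = 1) := by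
      rcases hadj with ⟨rfl, rfl⟩ | ⟨rfl, rfl⟩ | (⟨rfl, rfl⟩ | ⟨rfl, rfl⟩) <;> simp
    have hmem' := hmem
    simp only [exI3, Set.mem_insert_iff, Set.mem_singleton_iff] at hmem'
    rcases hmem' with h | h | h | h <;>
      rcases hxy with ⟨rfl, rfl⟩ | ⟨rfl, rfl⟩ | ⟨rfl, rfl⟩ | ⟨rfl, rfl⟩ <;>
      · simp only [Prod.mk.injEq] at h
        obtain ⟨h1, h2, -⟩ := h
        first
          | exact absurd (Set.singleton_eq_singleton_iff.mp h1) (by decide)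
          | exact absurd (Set.singleton_eq_singleton_iff.mp h2) (by decide)
  · -- not Faithful
    intro hf
    have h := hf {0} {2} {1} (by simp [exI3])
    have hs := h 0 rfl 2 rfl
    obtain ⟨p, hp⟩ := path02
    exact hs.2.2.2.1 p (hp {1} rfl)
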